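/- arXiv:2010.15267 — 9 statements merged into one kernel-verified Lean document; each statement's English description precedes it below -/
import Mathlib

section
/- If there exists a strictly feasible point x̃ ∈ X with g(x̃) < 0, then H(r) < 0 for every r > f*. -/
/-- If there exists a strictly feasible point `x̃ ∈ X` with `g(x̃) < 0`,
then `H(r) < 0` for every `r > f*`. -/
theorem stmt_3 {n : ℕ} (X : Set (EuclideanSpace ℝ (Fin n)))
    (hXne : X.Nonempty) (hXc : IsClosed X) (hXconv : Convex ℝ X)
    (f g : EuclideanSpace ℝ (Fin n) → ℝ)
    (hf : ConvexOn ℝ X f) (hg : ConvexOn ℝ X g)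
    (fstar : ℝ) (hfstar : IsLeast (f '' {x | x ∈ X ∧ g x ≤ 0}) fstar)
    (H : ℝ → ℝ)
    (hH : ∀ r : ℝ, IsLeast ((fun x => max (f x - r) (g x)) '' X) (H r))
    (xt : EuclideanSpace ℝ (Fin n)) (hxt : xt ∈ X) (hgxt : g xt < 0) :
    ∀ r : ℝ, fstar < r → H r < 0 := by
  intro r hr
  obtain ⟨xs, ⟨hxs, hgxs⟩, hfxs⟩ := hfstar.1
  have key : ∀ y ∈ X, max (f y - r) (g y) < 0 → H r < 0 := by
    intro y hy hlt
    exact lt_of_le_of_lt ((hH r).2 ⟨y, hy, rfl⟩) hlt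
  by_cases hcase : f xt < r
  · exact key xt hxt (max_lt (by linarith) hgxt)
  · push_neg at hcase
    have hd : (0:ℝ) < f xt - fstar := by linarith
    set t : ℝ := (r - fstar) / (2 * (f xt - fstar)) with ht
    have ht0 : 0 < t := div_pos (by linarith) (by linarith)
    have ht2 : t ≤ 1/2 := by
      rw [ht, div_le_iff₀ (by linarith)]
      nlinarith
    have ht1 : t < 1 := by linarith
    have hmem : (1 - t) • xs + t • xt ∈ X :=
      hXconv hxs hxt (by linarith) (le_of_lt ht0) (by ring)
    apply key _ hmem
    have hfle : f ((1 - t) • xs + t • xt) ≤ (1 - t) * f xs + t * f xt :=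
      hf.2 hxs hxt (by linarith) (le_of_lt ht0) (by ring)
    have hgle : g ((1 - t) • xs + t • xt) ≤ (1 - t) * g xs + t * g xt :=
      hg.2 hxs hxt (by linarith) (le_of_lt ht0) (by ring)
    have htval : t * (f xt - fstar) = (r - fstar) / 2 := by
      rw [ht]; field_simp
    apply max_lt
    · have : (1 - t) * f xs + t * f xt = fstar + t * (f xt - fstar) := by
        rw [hfxs]; ring
      rw [this, htval] at hfle
      linarith
    · nlinarith
end

section
/- Suppose r < f*, x ∈ X, α ∈ (0,1), α·P(x;r) < f* - r, and H(r) ≥ θ(f*-r) for a constant θ ∈ (0,1] (the condition-measure bound). Then the update r' = r + α·P(x;r) satisfies f* - r' ≤ (1 - αθ)(f* - r). -/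
/-- Under the condition-measure bound `H(r) ≥ θ(f*-r)`, the level update
`r' = r + α·P(x;r)` satisfies `f* - r' ≤ (1-αθ)(f* - r)`. -/
theorem stmt_8 {n : ℕ} (X : Set (EuclideanSpace ℝ (Fin n)))
    (hXne : X.Nonempty) (hXc : IsClosed X) (hXconv : Convex ℝ X)
    (f g : EuclideanSpace ℝ (Fin n) → ℝ)
    (hf : ConvexOn ℝ X f) (hg : ConvexOn ℝ X g)
    (fstar : ℝ) (hfstar : IsLeast (f '' {x | x ∈ X ∧ g x ≤ 0}) fstar)
    (H : ℝ → ℝ)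
    (hH : ∀ s : ℝ, IsLeast ((fun x => max (f x - s) (g x)) '' X) (H s))
    (α θ : ℝ) (hα0 : 0 < α) (hα1 : α < 1) (hθ0 : 0 < θ) (hθ1 : θ ≤ 1)
    (r : ℝ) (hr : r < fstar)
    (x : EuclideanSpace ℝ (Fin n)) (hx : x ∈ X)
    (hstep : α * max (f x - r) (g x) < fstar - r)
    (hcm : θ * (fstar - r) ≤ H r) :
    fstar - (r + α * max (f x - r) (g x)) ≤ (1 - α * θ) * (fstar - r) := by
  have hle : H r ≤ max (f x - r) (g x) := (hH r).2 ⟨x, hx, rfl⟩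
  nlinarith [mul_le_mul_of_nonneg_left (le_trans hcm hle) hα0.le]
end

section
/- Consider the level-set method iteration r_{k+1} = r_k + α·P(x_k;r_k), with r_0 < f*, α ∈ (0,1), and iterates x_k ∈ X satisfying α·P(x_k;r_k) < f* - r_k, under the condition-measure bound H(r) ≥ θ(f*-r) for all r < f* with θ ∈ (0,1]. Then for all k ≥ 0, r_k < f* and 0 ≤ f* - r_k ≤ (1-αθ)^k (f* - r_0), and consequently P(x_k;r_k) < (1/α)(1-αθ)^k (f* - r_0). -/
/-- Geometric convergence of the level-set method: `r_k < f*`,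
`0 ≤ f* - r_k ≤ (1-αθ)^k (f* - r_0)` and
`P(x_k;r_k) < (1/α)(1-αθ)^k (f* - r_0)` for all `k`. -/
theorem stmt_9 {n : ℕ} (X : Set (EuclideanSpace ℝ (Fin n)))
    (hXne : X.Nonempty) (hXc : IsClosed X) (hXconv : Convex ℝ X)
    (f g : EuclideanSpace ℝ (Fin n) → ℝ)
    (hf : ConvexOn ℝ X f) (hg : ConvexOn ℝ X g)
    (fstar : ℝ) (hfstar : IsLeast (f '' {x | x ∈ X ∧ g x ≤ 0}) fstar)
    (H : ℝ → ℝ)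
    (hH : ∀ s : ℝ, IsLeast ((fun x => max (f x - s) (g x)) '' X) (H s))
    (α θ : ℝ) (hα0 : 0 < α) (hα1 : α < 1) (hθ0 : 0 < θ) (hθ1 : θ ≤ 1)
    (hcm : ∀ s : ℝ, s < fstar → θ * (fstar - s) ≤ H s)
    (r : ℕ → ℝ) (x : ℕ → EuclideanSpace ℝ (Fin n))
    (hr0 : r 0 < fstar)
    (hxX : ∀ k, x k ∈ X)
    (hgood : ∀ k, α * max (f (x k) - r k) (g (x k)) < fstar - r k)
    (hrec : ∀ k, r (k + 1) = r k + α * max (f (x k) - r k) (g (x k))) :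
    ∀ k : ℕ,
      r k < fstar ∧
      0 ≤ fstar - r k ∧
      fstar - r k ≤ (1 - α * θ) ^ k * (fstar - r 0) ∧
      max (f (x k) - r k) (g (x k)) <
        (1 / α) * (1 - α * θ) ^ k * (fstar - r 0) := by
  have hαθ : 0 < 1 - α * θ := by nlinarith
  -- P(x_k; r_k) ≥ θ (f* - r_k) when r_k < f*
  have key : ∀ k, r k < fstar →
      θ * (fstar - r k) ≤ max (f (x k) - r k) (g (x k)) := by
    intro k hk
    have h1 : H (r k) ≤ max (f (x k) - r k) (g (x k)) :=
      (hH (r k)).2 ⟨x k, hxX k, rfl⟩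
    exact le_trans (hcm (r k) hk) h1
  intro k
  induction k with
  | zero =>
    refine ⟨hr0, by linarith, by simp, ?_⟩
    have := hgood 0
    rw [pow_zero, mul_one, div_mul_eq_mul_div, one_mul, lt_div_iff₀ hα0]
    linarith [hgood 0]
  | succ k ih =>
    obtain ⟨h1, h2, h3, h4⟩ := ih
    have hkey := key k h1
    have hgk := hgood k
    have hrk1 : r (k+1) = r k + α * max (f (x k) - r k) (g (x k)) := hrec k
    have hlt : r (k+1) < fstar := by rw [hrk1]; linarith
    have hbound : fstar - r (k+1) ≤ (1 - α * θ) ^ (k+1) * (fstar - r 0) := by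
      have step : fstar - r (k+1) ≤ (1 - α * θ) * (fstar - r k) := by
        rw [hrk1]; nlinarith
      calc fstar - r (k+1) ≤ (1 - α * θ) * (fstar - r k) := step
        _ ≤ (1 - α * θ) * ((1 - α * θ) ^ k * (fstar - r 0)) := by
            exact mul_le_mul_of_nonneg_left h3 (le_of_lt hαθ)
        _ = (1 - α * θ) ^ (k+1) * (fstar - r 0) := by ring
    refine ⟨hlt, by linarith, hbound, ?_⟩
    have hgk1 := hgood (k+1)
    rw [mul_assoc, div_mul_eq_mul_div, one_mul, lt_div_iff₀ hα0]
    calc max (f (x (k+1)) - r (k+1)) (g (x (k+1))) * α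
        = α * max (f (x (k+1)) - r (k+1)) (g (x (k+1))) := by ring
      _ < fstar - r (k+1) := hgk1
      _ ≤ (1 - α * θ) ^ (k+1) * (fstar - r 0) := hbound
end

section
/- Consider a level set sequence {(x_k, r_k)}_{k=0}^K with r_0 < f*, x_k ∈ X, and r_{k+1} = r_k + α·P(x_k;r_k) for α ∈ (0,1). If there is no index k ∈ {0,…,K} with r_k < f* and α·P(x_k;r_k) ≥ f* - r_k, and if K ≥ ⌈(1/(αθ))·ln((f*-r_0)/(αε))⌉, then P(x_K;r_K) ≤ ε, so x_K is ε-optimal and ε-feasible. -/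
/-- If no critical index exists up to `K` and
`K ≥ ⌈(1/(αθ))·ln((f*-r_0)/(αε))⌉`, then `P(x_K;r_K) ≤ ε`, so `x_K` is
`ε`-optimal and `ε`-feasible. -/
theorem stmt_12 {n : ℕ} (X : Set (EuclideanSpace ℝ (Fin n)))
    (hXne : X.Nonempty) (hXc : IsClosed X) (hXconv : Convex ℝ X)
    (f g : EuclideanSpace ℝ (Fin n) → ℝ)
    (hf : ConvexOn ℝ X f) (hg : ConvexOn ℝ X g)
    (fstar : ℝ) (hfstar : IsLeast (f '' {x | x ∈ X ∧ g x ≤ 0}) fstar)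
    (H : ℝ → ℝ)
    (hH : ∀ s : ℝ, IsLeast ((fun x => max (f x - s) (g x)) '' X) (H s))
    (α θ ε : ℝ) (hα0 : 0 < α) (hα1 : α < 1) (hθ0 : 0 < θ) (hθ1 : θ ≤ 1)
    (hε : 0 < ε)
    (hcm : ∀ s : ℝ, s < fstar → θ * (fstar - s) ≤ H s)
    (K : ℕ) (r : ℕ → ℝ) (x : ℕ → EuclideanSpace ℝ (Fin n))
    (hr0 : r 0 < fstar)
    (hxX : ∀ k, x k ∈ X)
    (hrec : ∀ k, k < K → r (k + 1) = r k + α * max (f (x k) - r k) (g (x k)))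
    (hnocrit : ∀ k, k ≤ K →
      ¬(r k < fstar ∧ fstar - r k ≤ α * max (f (x k) - r k) (g (x k))))
    (hK : (⌈(1 / (α * θ)) * Real.log ((fstar - r 0) / (α * ε))⌉₊ : ℕ) ≤ K) :
    max (f (x K) - r K) (g (x K)) ≤ ε ∧
      f (x K) - fstar ≤ ε ∧ g (x K) ≤ ε := by
  set c := α * θ with hc
  have hc0 : 0 < c := mul_pos hα0 hθ0
  have hc1 : c < 1 := by nlinarith
  have hD : 0 < fstar - r 0 := by linarith
  have hPlow : ∀ k, r k < fstar →
      θ * (fstar - r k) ≤ max (f (x k) - r k) (g (x k)) := by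
    intro k hk
    exact le_trans (hcm _ hk) ((hH (r k)).2 ⟨x k, hxX k, rfl⟩)
  have key : ∀ k, k ≤ K →
      r k < fstar ∧ fstar - r k ≤ (1 - c) ^ k * (fstar - r 0) := by
    intro k
    induction k with
    | zero => intro _; exact ⟨hr0, by simp⟩
    | succ k ih =>
      intro hk
      obtain ⟨h1, h2⟩ := ih (Nat.le_of_succ_le hk)
      have hkK : k < K := hk
      have hnc := hnocrit k (le_of_lt hkK)
      push_neg at hnc
      have hPc : α * max (f (x k) - r k) (g (x k)) < fstar - r k := hnc h1
      have hrec' := hrec k hkK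
      have hP := hPlow k h1
      have hmul := mul_le_mul_of_nonneg_left hP hα0.le
      constructor
      · linarith
      · have e : fstar - r (k + 1) ≤ (1 - c) * (fstar - r k) := by
          rw [hrec', hc]; nlinarith
        calc fstar - r (k + 1) ≤ (1 - c) * (fstar - r k) := e
          _ ≤ (1 - c) * ((1 - c) ^ k * (fstar - r 0)) :=
              mul_le_mul_of_nonneg_left h2 (by linarith)
          _ = (1 - c) ^ (k + 1) * (fstar - r 0) := by ring
  obtain ⟨hK1, hK2⟩ := key K le_rfl
  have hexp : (1 - c) ^ K ≤ Real.exp (-(c * K)) := by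
    calc (1 - c) ^ K ≤ (Real.exp (-c)) ^ K :=
          pow_le_pow_left₀ (by linarith) (by linarith [Real.add_one_le_exp (-c)]) K
      _ = Real.exp (-(c * K)) := by
          rw [← Real.exp_nat_mul]; ring_nf
  have hx : (1 / c) * Real.log ((fstar - r 0) / (α * ε)) ≤ (K : ℝ) :=
    le_trans (Nat.le_ceil _) (Nat.cast_le.mpr hK)
  have hlog : Real.log ((fstar - r 0) / (α * ε)) ≤ c * K := by
    have h := mul_le_mul_of_nonneg_left hx hc0.le
    have hne : c ≠ 0 := ne_of_gt hc0
    field_simp at h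
    linarith
  have hfrac : 0 < (fstar - r 0) / (α * ε) := div_pos hD (mul_pos hα0 hε)
  have h2 : Real.exp (-(c * K)) ≤ (α * ε) / (fstar - r 0) := by
    have hle : (fstar - r 0) / (α * ε) ≤ Real.exp (c * K) := by
      rw [← Real.exp_log hfrac]; exact Real.exp_le_exp.mpr hlog
    rw [Real.exp_neg]
    calc (Real.exp (c * K))⁻¹ ≤ ((fstar - r 0) / (α * ε))⁻¹ :=
          inv_anti₀ hfrac hle
      _ = (α * ε) / (fstar - r 0) := by rw [inv_div]
  have hgap : fstar - r K ≤ α * ε := by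
    calc fstar - r K ≤ (1 - c) ^ K * (fstar - r 0) := hK2
      _ ≤ Real.exp (-(c * K)) * (fstar - r 0) :=
          mul_le_mul_of_nonneg_right hexp hD.le
      _ ≤ ((α * ε) / (fstar - r 0)) * (fstar - r 0) :=
          mul_le_mul_of_nonneg_right h2 hD.le
      _ = α * ε := by field_simp
  have hnc := hnocrit K le_rfl
  push_neg at hnc
  have hPK : α * max (f (x K) - r K) (g (x K)) < fstar - r K := hnc hK1
  have hPε : max (f (x K) - r K) (g (x K)) ≤ ε := by
    have h := lt_of_lt_of_le hPK hgap
    exact le_of_lt ((mul_lt_mul_iff_right₀ hα0).mp h)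
  refine ⟨hPε, ?_, le_trans (le_max_right _ _) hPε⟩
  have := le_trans (le_max_left (f (x K) - r K) (g (x K))) hPε
  linarith
end

section
/- Consider a level set sequence {(x_k, r_k)}_{k=0}^K with r_0 < f* and r_{k+1} = r_k + α·P(x_k;r_k), α ∈ (0,1). If there exists an index k* with r_{k*} < f* and α·P(x_{k*};r_{k*}) ≥ f* - r_{k*}, then k* is unique, r_0 < r_1 < ⋯ < r_{k*} < f*, α·P(x_k;r_k) < f* - r_k for all k < k*, and r_k ≥ f* for all k > k*. -/
/-- If a critical index `k*` exists in a level set sequence, it is unique,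
`r_0 < ⋯ < r_{k*} < f*`, `α·P(x_k;r_k) < f* - r_k` for `k < k*`, and
`r_k ≥ f*` for `k > k*`. -/
theorem stmt_13 {n : ℕ} (X : Set (EuclideanSpace ℝ (Fin n)))
    (hXne : X.Nonempty) (hXc : IsClosed X) (hXconv : Convex ℝ X)
    (f g : EuclideanSpace ℝ (Fin n) → ℝ)
    (hf : ConvexOn ℝ X f) (hg : ConvexOn ℝ X g)
    (fstar : ℝ) (hfstar : IsLeast (f '' {x | x ∈ X ∧ g x ≤ 0}) fstar)
    (H : ℝ → ℝ)
    (hH : ∀ s : ℝ, IsLeast ((fun x => max (f x - s) (g x)) '' X) (H s))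
    (α θ : ℝ) (hα0 : 0 < α) (hα1 : α < 1) (hθ0 : 0 < θ) (hθ1 : θ ≤ 1)
    (hcm : ∀ s : ℝ, s < fstar → θ * (fstar - s) ≤ H s)
    (hsub : ∀ s : ℝ, -θ * (s - fstar) ≤ H s)
    (hHpos : ∀ s : ℝ, s < fstar → 0 < H s)
    (K : ℕ) (r : ℕ → ℝ) (x : ℕ → EuclideanSpace ℝ (Fin n))
    (hr0 : r 0 < fstar)
    (hxX : ∀ k, x k ∈ X)
    (hrec : ∀ k, k < K → r (k + 1) = r k + α * max (f (x k) - r k) (g (x k)))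
    (kstar : ℕ) (hkK : kstar ≤ K)
    (hcrit : r kstar < fstar ∧
      fstar - r kstar ≤ α * max (f (x kstar) - r kstar) (g (x kstar))) :
    (∀ j : ℕ, j ≤ K →
      (r j < fstar ∧ fstar - r j ≤ α * max (f (x j) - r j) (g (x j))) →
      j = kstar) ∧
    (∀ k : ℕ, k < kstar → r k < r (k + 1)) ∧
    r kstar < fstar ∧
    (∀ k : ℕ, k < kstar →
      α * max (f (x k) - r k) (g (x k)) < fstar - r k) ∧
    (∀ k : ℕ, kstar < k → k ≤ K → fstar ≤ r k) := by
  have hPH : ∀ k, H (r k) ≤ max (f (x k) - r k) (g (x k)) := fun k =>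
    (hH (r k)).2 ⟨x k, hxX k, rfl⟩
  have hA : ∀ k, k < K → fstar ≤ r k → fstar ≤ r (k + 1) := by
    intro k hk hge
    rw [hrec k hk]
    have h1 := hsub (r k)
    have h2 := hPH k
    nlinarith [mul_le_mul_of_nonneg_left (h1.trans h2) hα0.le, mul_le_one₀ hα1.le hθ0.le hθ1]
  have hB : ∀ j, j ≤ K → ∀ k, k ≤ j → fstar ≤ r k → fstar ≤ r j := by
    intro j
    induction j with
    | zero => intro _ k hk h; rwa [Nat.le_zero.mp hk] at h
    | succ j ih =>
      intro hj k hk h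
      rcases Nat.eq_or_lt_of_le hk with he | hlt
      · rwa [← he]
      · exact hA j (by omega) (ih (by omega) k (by omega) h)
  have h4 : ∀ k, k < kstar → α * max (f (x k) - r k) (g (x k)) < fstar - r k := by
    intro k hk
    by_contra hcon
    push_neg at hcon
    have hnext : fstar ≤ r (k + 1) := by
      rw [hrec k (by omega)]; linarith
    have := hB kstar hkK (k + 1) (by omega) hnext
    linarith [hcrit.1]
  have hlt : ∀ k, k ≤ kstar → r k < fstar := by
    intro k hk
    cases k with
    | zero => exact hr0
    | succ m =>
      have hm : m < kstar := by omega
      have := h4 m hm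
      rw [hrec m (by omega)]
      linarith
  refine ⟨?_, ?_, hcrit.1, h4, ?_⟩
  · intro j hjK ⟨hj1, hj2⟩
    rcases lt_trichotomy j kstar with h | h | h
    · exfalso; linarith [h4 j h]
    · exact h
    · exfalso
      have hnext : fstar ≤ r (kstar + 1) := by
        rw [hrec kstar (by omega)]; linarith [hcrit.2]
      have := hB j hjK (kstar + 1) (by omega) hnext
      linarith
  · intro k hk
    rw [hrec k (by omega)]
    have hpos := hHpos (r k) (hlt k (le_of_lt hk))
    have := hPH k
    nlinarith
  · intro k hk hkK'
    have hnext : fstar ≤ r (kstar + 1) := by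
      rw [hrec kstar (by omega)]; linarith [hcrit.2]
    exact hB k hkK' (kstar + 1) (by omega) hnext
end

section
/- (Subgradient descent bound) Let P: ℝⁿ → ℝ be convex with subgradients bounded by M on a closed convex set X, and let iterates x^{(t+1)} = Proj_X(x^{(t)} - η^{(t)} ξ^{(t)}) with ξ^{(t)} ∈ ∂P(x^{(t)}). Then for any x* ∈ X and any t ≥ 0, min_{s≤t} P(x^{(s)}) - P(x*) ≤ (‖x^{(0)} - x*‖² + Σ_{s=0}^{t} (η^{(s)})² ‖ξ^{(s)}‖²) / (2 Σ_{s=0}^{t} η^{(s)}). -/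
/-- Standard projected subgradient descent bound:
`min_{s≤t} P(x_s) - P(x*) ≤ (‖x_0 - x*‖² + Σ η_s²‖ξ_s‖²)/(2 Σ η_s)`. -/
theorem stmt_14 {n : ℕ} (X : Set (EuclideanSpace ℝ (Fin n)))
    (hXne : X.Nonempty) (hXc : IsClosed X) (hXconv : Convex ℝ X)
    (P : EuclideanSpace ℝ (Fin n) → ℝ) (hP : ConvexOn ℝ Set.univ P)
    (M : ℝ)
    (proj : EuclideanSpace ℝ (Fin n) → EuclideanSpace ℝ (Fin n))
    (hproj : ∀ y, proj y ∈ X ∧ ∀ z ∈ X, ‖y - proj y‖ ≤ ‖y - z‖)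
    (x ξ : ℕ → EuclideanSpace ℝ (Fin n)) (η : ℕ → ℝ)
    (hη : ∀ s, 0 < η s)
    (hx0 : x 0 ∈ X)
    (hsub : ∀ s, ∀ y : EuclideanSpace ℝ (Fin n),
      P (x s) + (inner ℝ (ξ s) (y - x s) : ℝ) ≤ P y)
    (hM : ∀ y ∈ X, ∀ s, ‖ξ s‖ ≤ M)
    (hiter : ∀ t : ℕ, x (t + 1) = proj (x t - η t • ξ t)) :
    ∀ xstar ∈ X, ∀ t : ℕ, ∃ s ≤ t,
      P (x s) - P xstar ≤
        (‖x 0 - xstar‖ ^ 2 +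
          ∑ s ∈ Finset.range (t + 1), (η s) ^ 2 * ‖ξ s‖ ^ 2) /
        (2 * ∑ s ∈ Finset.range (t + 1), η s) := by
  intro xstar hxstar t
  -- per-step key inequality
  have key : ∀ s, ‖x (s+1) - xstar‖^2 ≤
      ‖x s - xstar‖^2 - 2 * η s * (P (x s) - P xstar) + (η s)^2 * ‖ξ s‖^2 := by
    intro s
    set y := x s - η s • ξ s with hy
    have hps := hproj y
    set p := proj y with hp
    -- projection obtuse-angle property
    have hinf : ‖y - p‖ = ⨅ w : X, ‖y - w‖ := by
      haveI : Nonempty X := ⟨⟨p, hps.1⟩⟩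
      refine le_antisymm (le_ciInf fun w => hps.2 w w.2) ?_
      exact ciInf_le ⟨0, fun _ ⟨_, h⟩ => h ▸ norm_nonneg _⟩ (⟨p, hps.1⟩ : X)
    have hle := (norm_eq_iInf_iff_real_inner_le_zero hXconv hps.1).1 hinf xstar hxstar
    -- nonexpansiveness towards xstar
    have hnonexp : ‖p - xstar‖^2 ≤ ‖y - xstar‖^2 := by
      have hexp : ‖y - xstar‖^2
          = ‖y - p‖^2 + 2 * (inner ℝ (y - p) (p - xstar) : ℝ) + ‖p - xstar‖^2 := by
        have : y - xstar = (y - p) + (p - xstar) := by abel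
        rw [this, norm_add_sq_real]
      have h2 : (0:ℝ) ≤ inner ℝ (y - p) (p - xstar) := by
        have : (inner ℝ (y - p) (p - xstar) : ℝ) = - inner ℝ (y - p) (xstar - p) := by
          rw [← inner_neg_right]; congr 1; abel
        rw [this]; linarith
      nlinarith [sq_nonneg ‖y - p‖]
    have hxsucc : x (s+1) = p := by rw [hiter s]
    -- expand ‖y - xstar‖²
    have hexp2 : ‖y - xstar‖^2
        = ‖x s - xstar‖^2 - 2 * η s * (inner ℝ (ξ s) (x s - xstar) : ℝ)
          + (η s)^2 * ‖ξ s‖^2 := by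
      have : y - xstar = (x s - xstar) - η s • ξ s := by rw [hy]; abel
      rw [this, norm_sub_sq_real, inner_smul_right, norm_smul,
        real_inner_comm, mul_pow]
      simp [abs_of_pos (hη s)]
      ring
    have hsg : P (x s) - P xstar ≤ (inner ℝ (ξ s) (x s - xstar) : ℝ) := by
      have h := hsub s xstar
      have : (inner ℝ (ξ s) (xstar - x s) : ℝ) = - inner ℝ (ξ s) (x s - xstar) := by
        rw [← inner_neg_right]; congr 1; abel
      rw [this] at h
      linarith
    have := mul_le_mul_of_nonneg_left hsg (by linarith [hη s] : (0:ℝ) ≤ 2 * η s)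
    rw [hxsucc]
    nlinarith
  -- telescoping sum
  have hsum : ∀ k : ℕ, ∑ s ∈ Finset.range k, 2 * η s * (P (x s) - P xstar)
      + ‖x k - xstar‖^2
      ≤ ‖x 0 - xstar‖^2 + ∑ s ∈ Finset.range k, (η s)^2 * ‖ξ s‖^2 := by
    intro k
    induction k with
    | zero => simp
    | succ k ih =>
        rw [Finset.sum_range_succ, Finset.sum_range_succ]
        have := key k
        linarith
  have hsum' : ∑ s ∈ Finset.range (t+1), 2 * η s * (P (x s) - P xstar)
      ≤ ‖x 0 - xstar‖^2 + ∑ s ∈ Finset.range (t+1), (η s)^2 * ‖ξ s‖^2 := by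
    have := hsum (t+1)
    nlinarith [sq_nonneg ‖x (t+1) - xstar‖]
  -- pick the minimizer
  obtain ⟨s₀, hs₀mem, hs₀min⟩ := Finset.exists_min_image (Finset.range (t+1))
    (fun s => P (x s) - P xstar) ⟨0, Finset.mem_range.2 (Nat.succ_pos t)⟩
  refine ⟨s₀, Nat.lt_succ_iff.mp (Finset.mem_range.mp hs₀mem), ?_⟩
  have hηsum : (0:ℝ) < ∑ s ∈ Finset.range (t+1), η s :=
    Finset.sum_pos (fun s _ => hη s) ⟨0, Finset.mem_range.2 (Nat.succ_pos t)⟩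
  have hlhs : 2 * (∑ s ∈ Finset.range (t+1), η s) * (P (x s₀) - P xstar)
      ≤ ∑ s ∈ Finset.range (t+1), 2 * η s * (P (x s) - P xstar) := by
    have h1 : ∑ s ∈ Finset.range (t+1), 2 * η s * (P (x s₀) - P xstar)
        = (∑ s ∈ Finset.range (t+1), η s) * (2 * (P (x s₀) - P xstar)) := by
      rw [Finset.sum_mul]; exact Finset.sum_congr rfl fun s _ => by ring
    have h2 : ∑ s ∈ Finset.range (t+1), 2 * η s * (P (x s₀) - P xstar)
        ≤ ∑ s ∈ Finset.range (t+1), 2 * η s * (P (x s) - P xstar) :=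
      Finset.sum_le_sum fun s hs =>
        mul_le_mul_of_nonneg_left (hs₀min s hs) (by linarith [hη s])
    nlinarith [h1, h2]
  rw [le_div_iff₀ (by positivity)]
  calc (P (x s₀) - P xstar) * (2 * ∑ s ∈ Finset.range (t+1), η s)
      = 2 * (∑ s ∈ Finset.range (t+1), η s) * (P (x s₀) - P xstar) := by ring
    _ ≤ _ := le_trans hlhs hsum'
end

section
/- Suppose 0 < α < B < 1, r < f*, x⁰ ∈ X with P(x⁰;r) > ε > 0 and α·P(x⁰;r) > f* - r. Run projected subgradient descent on P(·;r) over X with step sizes η^{(t)} = (B-α)·P(x⁰;r)/‖ξ^{(t)}‖², where subgradient norms are bounded by M, and assume the error bound dist(x⁰, X*)^d ≤ G·max{f(x⁰)-f*, g(x⁰)} with d ≥ 1, G > 0. Then after at most ⌈M²G^{2/d} / ((B-α)² P(x⁰;r)^{2-2/d})⌉ - 1 iterations, the best iterate x̄ satisfies P(x̄;r) ≤ B·P(x⁰;r). -/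
set_option maxHeartbeats 1600000

lemma proj_sq_nonexp {E : Type*} [NormedAddCommGroup E] [InnerProductSpace ℝ E]
    {X : Set E} (hXconv : Convex ℝ X)
    {proj : E → E}
    (hproj : ∀ y, proj y ∈ X ∧ ∀ z ∈ X, ‖y - proj y‖ ≤ ‖y - z‖)
    (y : E) {z : E} (hz : z ∈ X) :
    ‖proj y - z‖ ^ 2 ≤ ‖y - z‖ ^ 2 := by
  have hmem := (hproj y).1
  haveI : Nonempty ↑X := ⟨⟨proj y, hmem⟩⟩
  have hinf : ‖y - proj y‖ = ⨅ w : X, ‖y - (w : E)‖ := by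
    refine le_antisymm (le_ciInf fun w => (hproj y).2 (↑w) w.2) ?_
    refine ciInf_le ⟨0, ?_⟩ (⟨proj y, hmem⟩ : X)
    rintro _ ⟨w, rfl⟩
    exact norm_nonneg _
  have hvar := (norm_eq_iInf_iff_real_inner_le_zero hXconv hmem).mp hinf z hz
  have hdecomp : y - z = (y - proj y) + (proj y - z) := by abel
  have hexp : ‖y - z‖ ^ 2 =
      ‖y - proj y‖ ^ 2 + 2 * (inner ℝ (y - proj y) (proj y - z) : ℝ) + ‖proj y - z‖ ^ 2 := by
    rw [hdecomp, norm_add_sq_real]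
  have hrw : (inner ℝ (y - proj y) (proj y - z) : ℝ) = - inner ℝ (y - proj y) (z - proj y) := by
    rw [← inner_neg_right, neg_sub]
  have hip : (0:ℝ) ≤ inner ℝ (y - proj y) (proj y - z) := by rw [hrw]; linarith
  nlinarith [sq_nonneg ‖y - proj y‖]

/-- Subgradient descent with step `η_t = (B-α)P(x⁰;r)/‖ξ_t‖²` under the error
bound condition reaches `P(x̄;r) ≤ B·P(x⁰;r)` within
`⌈M²G^{2/d}/((B-α)²P(x⁰;r)^{2-2/d})⌉ - 1` iterations. -/
theorem stmt_15 {n : ℕ} (X : Set (EuclideanSpace ℝ (Fin n)))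
    (hXne : X.Nonempty) (hXc : IsClosed X) (hXconv : Convex ℝ X)
    (f g : EuclideanSpace ℝ (Fin n) → ℝ)
    (hf : ConvexOn ℝ X f) (hg : ConvexOn ℝ X g)
    (fstar : ℝ) (hfstar : IsLeast (f '' {x | x ∈ X ∧ g x ≤ 0}) fstar)
    (Xstar : Set (EuclideanSpace ℝ (Fin n)))
    (hXstar : Xstar = {x | x ∈ X ∧ g x ≤ 0 ∧ f x = fstar})
    (α B ε r M G d : ℝ)
    (hα : 0 < α) (hαB : α < B) (hB : B < 1) (hε : 0 < ε)
    (hr : r < fstar) (hd : 1 ≤ d) (hG : 0 < G) (hM : 0 < M)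
    (proj : EuclideanSpace ℝ (Fin n) → EuclideanSpace ℝ (Fin n))
    (hproj : ∀ y, proj y ∈ X ∧ ∀ z ∈ X, ‖y - proj y‖ ≤ ‖y - z‖)
    (x ξ : ℕ → EuclideanSpace ℝ (Fin n))
    (hx0 : x 0 ∈ X)
    (hP0 : ε < max (f (x 0) - r) (g (x 0)))
    (hP0f : fstar - r < α * max (f (x 0) - r) (g (x 0)))
    (hEB : Metric.infDist (x 0) Xstar ^ d ≤
      G * max (f (x 0) - fstar) (g (x 0)))
    (hξne : ∀ t, ξ t ≠ 0)
    (hMb : ∀ t, ‖ξ t‖ ≤ M)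
    (hsub : ∀ t, ∀ y : EuclideanSpace ℝ (Fin n),
      max (f (x t) - r) (g (x t)) + (inner ℝ (ξ t) (y - x t) : ℝ) ≤
        max (f y - r) (g y))
    (hiter : ∀ t : ℕ, x (t + 1) =
      proj (x t - ((B - α) * max (f (x 0) - r) (g (x 0)) / ‖ξ t‖ ^ 2) • ξ t)) :
    ∃ s ≤ (⌈M ^ 2 * G ^ (2 / d) /
        ((B - α) ^ 2 * (max (f (x 0) - r) (g (x 0))) ^ (2 - 2 / d))⌉₊ - 1 : ℕ),
      max (f (x s) - r) (g (x s)) ≤ B * max (f (x 0) - r) (g (x 0)) := by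
  by_contra hcon
  push_neg at hcon
  set P0 : ℝ := max (f (x 0) - r) (g (x 0)) with hP0def
  have hP0pos : 0 < P0 := lt_trans hε hP0
  have hdpos : 0 < d := lt_of_lt_of_le one_pos hd
  have hBA : 0 < B - α := sub_pos.mpr hαB
  set K1 : ℝ := (B - α) * P0 with hK1def
  have hK1pos : 0 < K1 := mul_pos hBA hP0pos
  set δ0 : ℝ := α * P0 - (fstar - r) with hδ0def
  have hδ0pos : 0 < δ0 := by simp only [hδ0def]; linarith
  set e : ℝ := (K1 ^ 2 + 2 * δ0 * K1) / M ^ 2 with hedef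
  have hM2 : (0:ℝ) < M ^ 2 := by positivity
  have hnum : 0 < K1 ^ 2 + 2 * δ0 * K1 :=
    add_pos (pow_pos hK1pos 2) (mul_pos (mul_pos two_pos hδ0pos) hK1pos)
  have hepos : 0 < e := div_pos hnum hM2
  set K : ℝ := M ^ 2 * G ^ (2 / d) / ((B - α) ^ 2 * P0 ^ (2 - 2 / d)) with hKdef
  have hGP : (0:ℝ) < G ^ (2 / d) := Real.rpow_pos_of_pos hG _
  have hPP : (0:ℝ) < P0 ^ (2 - 2 / d) := Real.rpow_pos_of_pos hP0pos _
  have hKpos : 0 < K := div_pos (by positivity) (by positivity)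
  set T : ℕ := ⌈K⌉₊ with hTdef
  have hT1 : 1 ≤ T := Nat.ceil_pos.mpr hKpos
  have hTK : K ≤ (T : ℝ) := Nat.le_ceil K
  -- every iterate up to T - 1 has large P value
  have hbig : ∀ t : ℕ, t < T → B * P0 < max (f (x t) - r) (g (x t)) := by
    intro t ht
    exact hcon t (by omega)
  -- the key descent estimate, for any optimal point xs
  have key : ∀ xs : EuclideanSpace ℝ (Fin n), xs ∈ X → g xs ≤ 0 → f xs = fstar →
      (T : ℝ) * e ≤ ‖x 0 - xs‖ ^ 2 := by
    intro xs hxsX hxsg hxsf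
    have hstep : ∀ t : ℕ, t < T →
        ‖x (t + 1) - xs‖ ^ 2 ≤ ‖x t - xs‖ ^ 2 - e := by
      intro t ht
      have hnt : (0:ℝ) < ‖ξ t‖ := norm_pos_iff.mpr (hξne t)
      set nt : ℝ := ‖ξ t‖ with hntdef
      set η : ℝ := K1 / nt ^ 2 with hηdef
      have hnt2 : (0:ℝ) < nt ^ 2 := by positivity
      have hηpos : 0 < η := div_pos hK1pos hnt2
      have hηnt : η * nt ^ 2 = K1 := div_mul_cancel₀ _ (ne_of_gt hnt2)
      have h1 : ‖x (t + 1) - xs‖ ^ 2 ≤ ‖(x t - η • ξ t) - xs‖ ^ 2 := by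
        rw [hiter t]
        exact proj_sq_nonexp hXconv hproj _ hxsX
      have h2 : (x t - η • ξ t) - xs = (x t - xs) - η • ξ t := sub_right_comm _ _ _
      have h3 : ‖(x t - xs) - η • ξ t‖ ^ 2 =
          ‖x t - xs‖ ^ 2 - 2 * (η * (inner ℝ (ξ t) (x t - xs) : ℝ)) + η ^ 2 * nt ^ 2 := by
        rw [norm_sub_sq_real, real_inner_smul_right, norm_smul, Real.norm_eq_abs,
          real_inner_comm, mul_pow, sq_abs]
      -- subgradient inequality at xs
      have h4 : max (f (x t) - r) (g (x t)) + (inner ℝ (ξ t) (xs - x t) : ℝ) ≤ fstar - r := by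
        have := hsub t xs
        rwa [hxsf, max_eq_left (by linarith : g xs ≤ fstar - r)] at this
      have h5 : (inner ℝ (ξ t) (xs - x t) : ℝ) = -(inner ℝ (ξ t) (x t - xs) : ℝ) := by
        rw [← inner_neg_right, neg_sub]
      have hI : K1 + δ0 ≤ (inner ℝ (ξ t) (x t - xs) : ℝ) := by
        have hb := hbig t ht
        rw [h5] at h4
        simp only [hK1def, hδ0def]
        linarith only [hb, h4]
      have hntM : nt ^ 2 ≤ M ^ 2 := pow_le_pow_left₀ (norm_nonneg _) (hMb t) 2
      -- e ≤ η * (K1 + 2 δ0)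
      have hBdiv : (K1 ^ 2 + 2 * δ0 * K1) / M ^ 2 ≤ (K1 ^ 2 + 2 * δ0 * K1) / nt ^ 2 := by
        exact div_le_div_of_nonneg_left hnum.le hnt2 hntM
      have hBrw : (K1 ^ 2 + 2 * δ0 * K1) / nt ^ 2 = η * (K1 + 2 * δ0) := by
        rw [hηdef]; field_simp
      have he2 : e ≤ η * (K1 + 2 * δ0) := by rw [hedef, ← hBrw]; exact hBdiv
      have hA : η ^ 2 * nt ^ 2 = η * K1 := by
        calc η ^ 2 * nt ^ 2 = η * (η * nt ^ 2) := by ring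
        _ = η * K1 := by rw [hηnt]
      have hIη : 2 * η * (K1 + δ0) ≤ 2 * η * (inner ℝ (ξ t) (x t - xs) : ℝ) := by
        apply mul_le_mul_of_nonneg_left hI (by linarith)
      calc ‖x (t + 1) - xs‖ ^ 2 ≤ ‖(x t - xs) - η • ξ t‖ ^ 2 := by rw [← h2]; exact h1
      _ = ‖x t - xs‖ ^ 2 - 2 * (η * (inner ℝ (ξ t) (x t - xs) : ℝ)) + η ^ 2 * nt ^ 2 := h3
      _ ≤ ‖x t - xs‖ ^ 2 - e := by rw [hA]; linarith only [he2, hIη]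
    have hD : ∀ t : ℕ, t ≤ T → ‖x t - xs‖ ^ 2 ≤ ‖x 0 - xs‖ ^ 2 - t * e := by
      intro t
      induction t with
      | zero => intro _; simp
      | succ k ih =>
        intro hk
        have hk' : k < T := by omega
        have h1 := hstep k hk'
        have h2 := ih (by omega)
        push_cast
        linarith only [h1, h2]
    have h1 := hD T le_rfl
    linarith only [h1, sq_nonneg ‖x (T : ℕ) - xs‖]
  -- Xstar is nonempty
  obtain ⟨xs0, ⟨hxs0X, hxs0g⟩, hxs0f⟩ := hfstar.1
  have hXsne : Xstar.Nonempty := ⟨xs0, by rw [hXstar]; exact ⟨hxs0X, hxs0g, hxs0f⟩⟩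
  -- lower bound on infDist
  set L : ℝ := Real.sqrt ((T : ℝ) * e) with hLdef
  have hLnn : 0 ≤ L := Real.sqrt_nonneg _
  have hTe : 0 ≤ (T : ℝ) * e := by positivity
  have hLy : ∀ y ∈ Xstar, L ≤ dist (x 0) y := by
    intro y hy
    rw [hXstar] at hy
    obtain ⟨hyX, hyg, hyf⟩ := hy
    have hkey := key y hyX hyg hyf
    rw [dist_eq_norm]
    calc L ≤ Real.sqrt (‖x 0 - y‖ ^ 2) := Real.sqrt_le_sqrt hkey
    _ = ‖x 0 - y‖ := by rw [Real.sqrt_sq (norm_nonneg _)]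
  have hLinf : L ≤ Metric.infDist (x 0) Xstar := by
    by_contra hlt
    push_neg at hlt
    obtain ⟨y, hy, hdy⟩ := (Metric.infDist_lt_iff hXsne).mp hlt
    exact absurd (hLy y hy) (not_le.mpr hdy)
  have hinfnn : 0 ≤ Metric.infDist (x 0) Xstar := Metric.infDist_nonneg
  have hQP : max (f (x 0) - fstar) (g (x 0)) ≤ P0 := by
    apply max_le_max _ le_rfl
    linarith
  have hLd : L ^ d ≤ G * P0 := by
    calc L ^ d ≤ Metric.infDist (x 0) Xstar ^ d := Real.rpow_le_rpow hLnn hLinf (by linarith)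
    _ ≤ G * max (f (x 0) - fstar) (g (x 0)) := hEB
    _ ≤ G * P0 := mul_le_mul_of_nonneg_left hQP hG.le
  have hmain : (T : ℝ) * e ≤ G ^ (2 / d) * P0 ^ (2 / d) := by
    have h2d : 0 ≤ 2 / d := by positivity
    have hstep1 : (L ^ d) ^ (2 / d) ≤ (G * P0) ^ (2 / d) :=
      Real.rpow_le_rpow (Real.rpow_nonneg hLnn d) hLd h2d
    have hL2 : (L ^ d) ^ (2 / d) = (T : ℝ) * e := by
      have hdd : d * (2 / d) = 2 := by field_simp
      rw [← Real.rpow_mul hLnn, hdd,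
        show (2:ℝ) = ((2:ℕ):ℝ) by norm_num, Real.rpow_natCast]
      exact Real.sq_sqrt hTe
    have hGPr : (G * P0) ^ (2 / d) = G ^ (2 / d) * P0 ^ (2 / d) :=
      Real.mul_rpow hG.le hP0pos.le
    rw [hL2, hGPr] at hstep1
    exact hstep1
  -- compute K * (K1^2/M^2) = G^(2/d) * P0^(2/d)
  have hKc : K * (K1 ^ 2 / M ^ 2) = G ^ (2 / d) * P0 ^ (2 / d) := by
    have hPsplit : P0 ^ (2:ℝ) = P0 ^ (2 - 2 / d) * P0 ^ (2 / d) := by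
      rw [← Real.rpow_add hP0pos]; ring_nf
    have hP2 : P0 ^ (2:ℕ) = P0 ^ (2:ℝ) := by
      rw [← Real.rpow_natCast P0 2]; norm_num
    rw [hKdef, hK1def]
    rw [mul_pow, hP2, hPsplit]
    field_simp
  -- final contradiction
  have hc1 : (0:ℝ) ≤ K1 ^ 2 / M ^ 2 := by positivity
  have hc2 : (0:ℝ) < 2 * δ0 * K1 / M ^ 2 := by positivity
  have hesplit : e = K1 ^ 2 / M ^ 2 + 2 * δ0 * K1 / M ^ 2 := by
    rw [hedef]; ring
  have hT1' : (1:ℝ) ≤ (T:ℝ) := by exact_mod_cast hT1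
  rw [hesplit] at hmain
  have hA1 : K * (K1 ^ 2 / M ^ 2) ≤ (T:ℝ) * (K1 ^ 2 / M ^ 2) :=
    mul_le_mul_of_nonneg_right hTK hc1
  have hA2 : 1 * (2 * δ0 * K1 / M ^ 2) ≤ (T:ℝ) * (2 * δ0 * K1 / M ^ 2) :=
    mul_le_mul_of_nonneg_right hT1' hc2.le
  linarith only [hmain, hKc, hA1, hA2, hc2]
end

section
/- In the restarting level set method, suppose a restart is initiated at index k' (so r_{k'} is unchanged and P(x_{k'}^{new};r_{k'}) ≤ B·P(x_{k'}^{old};r_{k'}) with P(x_{k'}^{old};r_{k'}) ≥ 0), and the subsequent level parameters are updated by r_{k+1}^{new} = r_k^{new} + α·P(x_k^{new};r_k^{new}) with x_k^{new} = x_k^{old} for k > k'. Then r_{k'+1}^{old} - r_{k'+1}^{new} ≥ α(1-B)·P(x_{k'}^{old};r_{k'}), and for every k ≥ k'+1, r_k^{old} - r_k^{new} ≥ (1-α)^{k-k'-1}·α(1-B)·P(x_{k'}^{old};r_{k'}). -/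
lemma max_add_mono (a b r s : ℝ) (h : s ≤ r) :
    max (a - s) b + s ≤ max (a - r) b + r := by
  have h1 : a - r ≤ max (a - r) b := le_max_left _ _
  have h2 : b ≤ max (a - r) b := le_max_right _ _
  have : max (a - s) b ≤ max (a - r) b + r - s := by
    apply max_le <;> linarith
  linarith

/-- Level parameter decrease after a restart at index `k'`:
`r_{k}^{old} - r_k^{new} ≥ (1-α)^{k-k'-1} α (1-B) P(x_{k'}^{old}; r_{k'})`
for every `k ≥ k'+1`. -/
theorem stmt_17 {n : ℕ} (f g : EuclideanSpace ℝ (Fin n) → ℝ)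
    (α B : ℝ) (hα : 0 < α) (hαB : α < B) (hB : B < 1)
    (rold rnew : ℕ → ℝ) (xold xnew : ℕ → EuclideanSpace ℝ (Fin n))
    (k' : ℕ)
    (hrold : ∀ k, k' ≤ k →
      rold (k + 1) = rold k + α * max (f (xold k) - rold k) (g (xold k)))
    (hrnew : ∀ k, k' ≤ k →
      rnew (k + 1) = rnew k + α * max (f (xnew k) - rnew k) (g (xnew k)))
    (hrk' : rnew k' = rold k')
    (hxsame : ∀ k, k' < k → xnew k = xold k)
    (hPold0 : 0 ≤ max (f (xold k') - rold k') (g (xold k')))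
    (hPred : max (f (xnew k') - rold k') (g (xnew k')) ≤
      B * max (f (xold k') - rold k') (g (xold k'))) :
    rold (k' + 1) - rnew (k' + 1) ≥
      α * (1 - B) * max (f (xold k') - rold k') (g (xold k')) ∧
    ∀ k, k' + 1 ≤ k →
      rold k - rnew k ≥ (1 - α) ^ (k - k' - 1) *
        (α * (1 - B) * max (f (xold k') - rold k') (g (xold k'))) := by
  set P := max (f (xold k') - rold k') (g (xold k')) with hP
  have hαpos : (0:ℝ) < 1 - α := by linarith
  have hD : 0 ≤ α * (1 - B) * P := mul_nonneg (mul_nonneg hα.le (by linarith)) hPold0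
  have hbase : rold (k' + 1) - rnew (k' + 1) ≥ α * (1 - B) * P := by
    have h1 := hrold k' le_rfl
    have h2 := hrnew k' le_rfl
    rw [h1, h2, hrk']
    have : α * (B * P) ≥ α * max (f (xnew k') - rold k') (g (xnew k')) :=
      mul_le_mul_of_nonneg_left hPred hα.le
    nlinarith
  refine ⟨hbase, ?_⟩
  intro k hk
  induction k, hk using Nat.le_induction with
  | base => simpa using hbase
  | succ k hk ih =>
    have hkk : k' ≤ k := le_trans (Nat.le_succ k') hk
    have hx := hxsame k (lt_of_lt_of_le (Nat.lt_succ_self k') hk)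
    have hge : rnew k ≤ rold k := by nlinarith [pow_nonneg hαpos.le (k - k' - 1)]
    have hmono := max_add_mono (f (xold k)) (g (xold k)) (rold k) (rnew k) hge
    have h1 := hrold k hkk
    have h2 := hrnew k hkk
    rw [hx] at h2
    have key : rold (k + 1) - rnew (k + 1) ≥ (1 - α) * (rold k - rnew k) := by
      rw [h1, h2]; nlinarith
    have hexp : k + 1 - k' - 1 = (k - k' - 1) + 1 := by omega
    rw [hexp, pow_succ]
    calc (1 - α) ^ (k - k' - 1) * (1 - α) * (α * (1 - B) * P)
        = (1 - α) * ((1 - α) ^ (k - k' - 1) * (α * (1 - B) * P)) := by ring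
      _ ≤ (1 - α) * (rold k - rnew k) := by
          exact mul_le_mul_of_nonneg_left ih hαpos.le
      _ ≤ rold (k + 1) - rnew (k + 1) := key
end

section
/- Define V(x,r) = f* - r - α·P(x;r) with α ∈ (0,1). If V(x,r) ≥ 0, P(x;r) ≥ 0, a point x' satisfies P(x';r) ≤ B·P(x;r) for B ∈ (α,1), and H(r) ≥ θ(f*-r) with θ ∈ (0,1] where r < f*, then V(x',r) ≥ (1 + α(1-B)θ)·V(x,r) whenever V(x,r) > 0; in particular V(x',r) ≥ V(x,r) ≥ 0. -/
/-- Growth of `V(x,r) = f* - r - α·P(x;r)` under a restart: if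
`P(x';r) ≤ B·P(x;r)` and `H(r) ≥ θ(f*-r)` with `r < f*`, then
`V(x',r) ≥ (1+α(1-B)θ)·V(x,r)` whenever `V(x,r) > 0`, and in particular
`V(x',r) ≥ V(x,r) ≥ 0`. -/
theorem stmt_18 {n : ℕ} (X : Set (EuclideanSpace ℝ (Fin n)))
    (hXne : X.Nonempty) (hXc : IsClosed X) (hXconv : Convex ℝ X)
    (f g : EuclideanSpace ℝ (Fin n) → ℝ)
    (hf : ConvexOn ℝ X f) (hg : ConvexOn ℝ X g)
    (fstar : ℝ) (hfstar : IsLeast (f '' {x | x ∈ X ∧ g x ≤ 0}) fstar)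
    (H : ℝ → ℝ)
    (hH : ∀ s : ℝ, IsLeast ((fun x => max (f x - s) (g x)) '' X) (H s))
    (α B θ : ℝ) (hα0 : 0 < α) (hα1 : α < 1) (hαB : α < B) (hB : B < 1)
    (hθ0 : 0 < θ) (hθ1 : θ ≤ 1)
    (r : ℝ) (hr : r < fstar)
    (hcm : θ * (fstar - r) ≤ H r)
    (x x' : EuclideanSpace ℝ (Fin n)) (hx : x ∈ X) (hx' : x' ∈ X)
    (hV : 0 ≤ fstar - r - α * max (f x - r) (g x))
    (hPx : 0 ≤ max (f x - r) (g x))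
    (hPred : max (f x' - r) (g x') ≤ B * max (f x - r) (g x)) :
    (0 < fstar - r - α * max (f x - r) (g x) →
      (1 + α * (1 - B) * θ) * (fstar - r - α * max (f x - r) (g x)) ≤
        fstar - r - α * max (f x' - r) (g x')) ∧
    fstar - r - α * max (f x - r) (g x) ≤
      fstar - r - α * max (f x' - r) (g x') := by
  have hHP : H r ≤ max (f x - r) (g x) := (hH r).2 ⟨x, hx, rfl⟩
  have hθP : θ * (fstar - r) ≤ max (f x - r) (g x) := le_trans hcm hHP
  constructor
  · intro _
    have h1 : 0 ≤ α * (1 - B) := mul_nonneg hα0.le (by linarith)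
    nlinarith [mul_nonneg h1 (sub_nonneg.2 hθP),
      mul_nonneg (mul_nonneg h1 hθ0.le) (mul_nonneg hα0.le hPx)]
  · nlinarith [mul_nonneg hα0.le hPx]
end
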